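/- arXiv:1108.0276 — 5 statements merged into one kernel-verified Lean document; each statement's English description precedes it below -/
import Mathlib

section
/- Let n ∈ ℕ. A metric space X embeds isometrically in Euclidean space E^n if and only if: (a) (−1)^{k+1} D_k(x_0,...,x_k) ≥ 0 for every (k+1)-tuple of points of X with k ≤ n, and (b) D_k(x_0,...,x_k) = 0 for every (k+1)-tuple of points of X with k = n+1 and k = n+2. -/
/-- The Cayley–Menger determinant of `k+1` points of a metric space. -/
def cayleyMenger {X : Type*} [PseudoMetricSpace X] (k : ℕ) (x : Fin (k + 1) → X) : ℝ :=
  Matrix.det (Matrix.of fun i j : Fin (k + 2) =>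
    if hi : i = 0 then (if j = 0 then 0 else 1)
    else if hj : j = 0 then 1
    else dist (x (i.pred hi)) (x (j.pred hj)) ^ 2)

/-!
Fix a base point `b`. The Cayley–Menger determinant of `(b, x₁, …, x_k)` is
`(-1)^(k+1) 2^k` times the determinant of the matrix `innerAt b xᵢ xⱼ`, which for points of a
Euclidean space is the Gram matrix of the vectors `xᵢ - b`; necessity is then positive
semidefiniteness of Gram matrices and the bound `n` on their rank.

For sufficiency, take a tuple `q` of maximal length `m ≤ n` whose matrix `G` is positive
definite. With `v x = (innerAt b (q l) x)ₗ`, the Schur complement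
`innerAt b x y - v xᵀ G⁻¹ v y` vanishes on the diagonal (maximality of `q`), and the
determinant condition for `q` extended by two points makes it vanish everywhere. Hence
`innerAt b x y = ⟪P v x, P v y⟫` for any `P : ℝ^{n×m}` with `PᵀP = G⁻¹`, and `x ↦ P v x` is an
isometry into `ℝⁿ`.
-/

open Matrix
open scoped RealInnerProductSpace

lemma det_fromBlocks_swap_ones {R : Type*} [CommRing R] {k : ℕ} (β : Fin k → R)
    (D : Matrix (Fin k) (Fin k) R) :
    (fromBlocks !![0, 1; 1, 0] (of ![1, β]) (of ![1, β])ᵀ D).det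
      = -(D - of fun i j => β i + β j).det := by
  have hA : !![(0 : R), 1; 1, 0] * !![0, 1; 1, 0] = 1 := by
    rw [one_fin_two]; simp
  let : Invertible !![(0 : R), 1; 1, 0] := ⟨_, hA, hA⟩
  rw [det_fromBlocks₁₁, invOf_eq_left_inv hA, det_fin_two_of]
  have hschur :
      (of ![1, β])ᵀ * !![(0 : R), 1; 1, 0] * of ![1, β] = of fun i j => β i + β j := by
    ext i j
    simp [mul_apply, Fin.sum_univ_two, add_comm]
  rw [hschur]
  ring

def consSumEquiv (k : ℕ) : Fin 2 ⊕ Fin k ≃ Fin (k + 2) :=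
  finSumFinEquiv.trans (finCongr (add_comm 2 k))

@[simp] lemma consSumEquiv_inl_zero (k : ℕ) : consSumEquiv k (.inl 0) = 0 := rfl
@[simp] lemma consSumEquiv_inl_one (k : ℕ) :
    consSumEquiv k (.inl 1) = (0 : Fin (k + 1)).succ := by
  ext; simp [consSumEquiv]
@[simp] lemma consSumEquiv_inr (k : ℕ) (j : Fin k) : consSumEquiv k (.inr j) = j.succ.succ := by
  ext; simp [consSumEquiv]

section

variable {X : Type*} [PseudoMetricSpace X]

/-- `⟪x - b, y - b⟫`, written in terms of distances by polarization. -/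
noncomputable def innerAt (b x y : X) : ℝ := (dist b x ^ 2 + dist b y ^ 2 - dist x y ^ 2) / 2

noncomputable def gramAt (b : X) {k : ℕ} (q : Fin k → X) : Matrix (Fin k) (Fin k) ℝ :=
  of fun i j => innerAt b (q i) (q j)

lemma cayleyMenger_cons (b : X) {k : ℕ} (q : Fin k → X) :
    cayleyMenger k (Fin.cons b q) = (-1) ^ (k + 1) * 2 ^ k * (gramAt b q).det := by
  have hschur : (of fun i j => dist (q i) (q j) ^ 2)
      - (of fun i j => dist b (q i) ^ 2 + dist b (q j) ^ 2) = (-2 : ℝ) • gramAt b q := by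
    ext i j
    simp only [Matrix.sub_apply, of_apply, Matrix.smul_apply, gramAt, innerAt, smul_eq_mul]
    ring
  calc cayleyMenger k (Fin.cons b q)
      = (fromBlocks !![0, 1; 1, 0] (of ![1, fun i => dist b (q i) ^ 2])
          (of ![1, fun i => dist b (q i) ^ 2])ᵀ (of fun i j => dist (q i) (q j) ^ 2)).det := by
        rw [cayleyMenger, ← det_submatrix_equiv_self (consSumEquiv k)]
        congr 1
        ext (i | i) (j | j)
        · fin_cases i <;> fin_cases j <;> simp
        · fin_cases i <;> simp
        · fin_cases j <;> simp [dist_comm]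
        · simp
    _ = -((-2 : ℝ) • gramAt b q).det := by rw [det_fromBlocks_swap_ones, hschur]
    _ = (-1) ^ (k + 1) * 2 ^ k * (gramAt b q).det := by
        rw [det_smul, Fintype.card_fin, neg_pow]
        ring

lemma neg_one_pow_mul_cayleyMenger_cons (b : X) {k : ℕ} (q : Fin k → X) :
    (-1) ^ (k + 1) * cayleyMenger k (Fin.cons b q) = 2 ^ k * (gramAt b q).det := by
  rw [cayleyMenger_cons, ← mul_assoc, ← mul_assoc, ← pow_add, Even.neg_one_pow ⟨_, rfl⟩,
    one_mul]

lemma innerAt_comm (b x y : X) : innerAt b x y = innerAt b y x := by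
  rw [innerAt, innerAt, dist_comm x y, add_comm (dist b x ^ 2)]

lemma innerAt_self (b x : X) : innerAt b x x = dist b x ^ 2 := by
  simp [innerAt]

lemma gramAt_transpose (b : X) {k : ℕ} (q : Fin k → X) : (gramAt b q)ᵀ = gramAt b q := by
  ext i j
  exact innerAt_comm b (q j) (q i)

section Isometry

variable {E : Type*} [NormedAddCommGroup E] [InnerProductSpace ℝ E] {f : X → E}

lemma Isometry.innerAt_eq_inner (hf : Isometry f) (b x y : X) :
    innerAt b x y = ⟪f x - f b, f y - f b⟫ := by
  have h := norm_sub_sq_real (f x - f b) (f y - f b)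
  rw [sub_sub_sub_cancel_right, ← dist_eq_norm, ← dist_eq_norm, ← dist_eq_norm, hf.dist_eq,
    hf.dist_eq, hf.dist_eq] at h
  rw [innerAt, dist_comm b x, dist_comm b y]
  linarith

lemma Isometry.gramAt_eq_gram (hf : Isometry f) (b : X) {k : ℕ} (q : Fin k → X) :
    gramAt b q = gram ℝ fun i => f (q i) - f b := by
  ext i j
  exact hf.innerAt_eq_inner b (q i) (q j)

lemma Isometry.det_gramAt_nonneg (hf : Isometry f) (b : X) {k : ℕ} (q : Fin k → X) :
    0 ≤ (gramAt b q).det := by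
  rw [hf.gramAt_eq_gram]
  exact (posSemidef_gram ℝ _).det_nonneg

lemma Isometry.det_gramAt_eq_zero [FiniteDimensional ℝ E] (hf : Isometry f) (b : X) {k : ℕ}
    (hk : Module.finrank ℝ E < k) (q : Fin k → X) : (gramAt b q).det = 0 := by
  rw [hf.gramAt_eq_gram, ← not_ne_iff, det_gram_ne_zero_iff_linearIndependent]
  intro hli
  have := hli.fintype_card_le_finrank
  rw [Fintype.card_fin] at this
  omega

end Isometry

section Schur

variable (b : X) {m : ℕ} (q : Fin m → X)

/-- `⟪x - b, y - b⟫`, written in terms of distances by polarization. -/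
noncomputable def innerAtVec (x : X) : Fin m → ℝ := fun l => innerAt b (q l) x

noncomputable def schurAt (x y : X) : ℝ :=
  innerAt b x y - innerAtVec b q x ⬝ᵥ (gramAt b q)⁻¹ *ᵥ innerAtVec b q y

noncomputable def crossGramAt {c : ℕ} (r : Fin c → X) : Matrix (Fin m) (Fin c) ℝ :=
  of fun i j => innerAt b (q i) (r j)

lemma gramAt_append_submatrix {c : ℕ} (r : Fin c → X) :
    (gramAt b (Fin.append q r)).submatrix finSumFinEquiv finSumFinEquiv
      = fromBlocks (gramAt b q) (crossGramAt b q r) (crossGramAt b q r)ᴴ (gramAt b r) := by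
  ext (i | i) (j | j)
  · simp [gramAt]
  · simp [gramAt, crossGramAt]
  · simp [gramAt, crossGramAt, innerAt_comm]
  · simp [gramAt]

lemma gramAt_sub_schur {c : ℕ} (r : Fin c → X) :
    gramAt b r - (crossGramAt b q r)ᴴ * (gramAt b q)⁻¹ * crossGramAt b q r
      = of fun i j => schurAt b q (r i) (r j) := by
  ext i j
  rw [Matrix.mul_assoc]
  simp [schurAt, gramAt, crossGramAt, innerAtVec, mul_apply, dotProduct, mulVec]

lemma det_gramAt_append (hq : IsUnit (gramAt b q).det) {c : ℕ} (r : Fin c → X) :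
    (gramAt b (Fin.append q r)).det
      = (gramAt b q).det * (of fun i j => schurAt b q (r i) (r j)).det := by
  let := (gramAt b q).invertibleOfIsUnitDet hq
  rw [← det_submatrix_equiv_self finSumFinEquiv, gramAt_append_submatrix, det_fromBlocks₁₁,
    invOf_eq_nonsing_inv, gramAt_sub_schur]

lemma schurAt_comm (x y : X) : schurAt b q x y = schurAt b q y x := by
  have hinv : (gramAt b q)⁻¹ᵀ = (gramAt b q)⁻¹ := by
    rw [transpose_nonsing_inv, gramAt_transpose]
  rw [schurAt, schurAt, innerAt_comm]
  congr 1
  rw [dotProduct_mulVec, ← mulVec_transpose, hinv, dotProduct_comm]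

variable {b q}

lemma posDef_gramAt_append_singleton (hq : (gramAt b q).PosDef) {x : X}
    (h : 0 < (gramAt b (Fin.append q ![x])).det) : (gramAt b (Fin.append q ![x])).PosDef := by
  have hunit := (isUnit_iff_isUnit_det _).mp hq.isUnit
  let := (gramAt b q).invertibleOfIsUnitDet hunit
  have hschur : 0 ≤ schurAt b q x x := by
    rw [det_gramAt_append b q hunit, det_fin_one] at h
    exact (pos_of_mul_pos_right h hq.det_pos.le).le
  refine PosSemidef.posDef_iff_det_ne_zero ?_ |>.mpr h.ne'
  rw [← posSemidef_submatrix_equiv finSumFinEquiv, gramAt_append_submatrix,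
    PosDef.fromBlocks₁₁ _ _ hq, gramAt_sub_schur]
  have hdiag :
      (of fun i j => schurAt b q (![x] i) (![x] j)) = diagonal fun _ => schurAt b q x x := by
    ext i j
    fin_cases i; fin_cases j
    rfl
  rw [hdiag]
  exact posSemidef_diagonal_iff.mpr fun _ => hschur

lemma schurAt_self_eq_zero (hq : (gramAt b q).PosDef) {x : X}
    (h : (gramAt b (Fin.append q ![x])).det = 0) : schurAt b q x x = 0 := by
  rw [det_gramAt_append b q ((isUnit_iff_isUnit_det _).mp hq.isUnit), det_fin_one] at h
  exact (mul_eq_zero.mp h).resolve_left hq.det_pos.ne'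

lemma schurAt_eq_zero (hq : (gramAt b q).PosDef) {x y : X} (hx : schurAt b q x x = 0)
    (hy : schurAt b q y y = 0) (h : 0 ≤ (gramAt b (Fin.append q ![x, y])).det) :
    schurAt b q x y = 0 := by
  rw [det_gramAt_append b q ((isUnit_iff_isUnit_det _).mp hq.isUnit), det_fin_two,
    (mul_nonneg_iff_of_pos_left hq.det_pos)] at h
  simp only [of_apply, cons_val_zero, cons_val_one, hx, hy, schurAt_comm b q y x] at h
  nlinarith

end Schur

lemma exists_posDef_gramAt_maximal (b : X) {n : ℕ}
    (hnonneg : ∀ j ≤ n + 1, ∀ q : Fin j → X, 0 ≤ (gramAt b q).det)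
    (hzero : ∀ q : Fin (n + 1) → X, (gramAt b q).det = 0) :
    ∃ m ≤ n, ∃ q : Fin m → X, (gramAt b q).PosDef ∧
      ∀ x, (gramAt b (Fin.append q ![x])).det = 0 := by
  classical
  let P (m : ℕ) : Prop := ∃ q : Fin m → X, (gramAt b q).PosDef
  have hP0 : P 0 := ⟨Fin.elim0, Subsingleton.elim 1 (gramAt b Fin.elim0) ▸ PosDef.one⟩
  have hPn : ¬ P (n + 1) := fun ⟨q, hq⟩ => hq.det_pos.ne' (hzero q)
  obtain ⟨q, hq⟩ : P (Nat.findGreatest P (n + 1)) := Nat.findGreatest_spec (Nat.zero_le _) hP0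
  have hm : Nat.findGreatest P (n + 1) ≠ n + 1 := fun h => hPn (h ▸ ⟨q, hq⟩)
  have hle : Nat.findGreatest P (n + 1) ≤ n + 1 := Nat.findGreatest_le _
  refine ⟨_, by omega, q, hq, fun x => ?_⟩
  by_contra hne
  have hpos := lt_of_le_of_ne (hnonneg _ (by omega) (Fin.append q ![x])) (Ne.symm hne)
  exact Nat.findGreatest_is_greatest (P := P) (n := n + 1) (Nat.lt_succ_self _) (by omega)
    ⟨_, posDef_gramAt_append_singleton hq hpos⟩

open scoped MatrixOrder in
lemma exists_transpose_mul_self_eq {m n : ℕ} (hmn : m ≤ n) {A : Matrix (Fin m) (Fin m) ℝ}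
    (hA : A.PosSemidef) : ∃ P : Matrix (Fin n) (Fin m) ℝ, Pᵀ * P = A := by
  let S := CFC.sqrt A
  have hS : Sᵀ = S := (CFC.sqrt_nonneg A).isSelfAdjoint
  let T : Matrix (Fin n) (Fin m) ℝ :=
    (1 : Matrix (Fin n) (Fin n) ℝ).submatrix id (Fin.castLE hmn)
  have hT : Tᵀ * T = 1 := by
    rw [transpose_submatrix, transpose_one, ← submatrix_mul _ _ _ _ _ Function.bijective_id,
      Matrix.one_mul, submatrix_one _ (Fin.castLE_injective hmn)]
  refine ⟨T * S, ?_⟩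
  rw [transpose_mul, Matrix.mul_assoc, ← Matrix.mul_assoc Tᵀ, hT, Matrix.one_mul, hS,
    CFC.sqrt_mul_sqrt_self A hA.nonneg]

lemma isometry_of_inner_eq_innerAt {E : Type*} [NormedAddCommGroup E] [InnerProductSpace ℝ E]
    {b : X} {w : X → E} (hw : ∀ x y, ⟪w x, w y⟫ = innerAt b x y) : Isometry w := by
  refine Isometry.of_dist_eq fun x y => ?_
  have h : ‖w x - w y‖ ^ 2 = dist x y ^ 2 := by
    rw [← real_inner_self_eq_norm_sq, inner_sub_left, inner_sub_right, inner_sub_right, hw, hw,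
      hw, hw, innerAt_self, innerAt_self, innerAt_comm b y x, innerAt]
    ring
  rwa [dist_eq_norm, ← pow_left_inj₀ (norm_nonneg _) dist_nonneg two_ne_zero]

lemma exists_isometry_euclideanSpace_of_det_gramAt (b : X) {n : ℕ}
    (hnonneg : ∀ j ≤ n + 2, ∀ q : Fin j → X, 0 ≤ (gramAt b q).det)
    (hzero : ∀ q : Fin (n + 1) → X, (gramAt b q).det = 0) :
    ∃ f : X → EuclideanSpace ℝ (Fin n), Isometry f := by
  obtain ⟨m, hmn, q, hq, hext⟩ :=
    exists_posDef_gramAt_maximal b (fun j hj => hnonneg j (by omega)) hzero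
  have hinner (x y : X) :
      innerAt b x y = innerAtVec b q x ⬝ᵥ (gramAt b q)⁻¹ *ᵥ innerAtVec b q y :=
    sub_eq_zero.mp <| schurAt_eq_zero hq (schurAt_self_eq_zero hq (hext x))
      (schurAt_self_eq_zero hq (hext y)) (hnonneg _ (by omega) _)
  obtain ⟨P, hP⟩ := exists_transpose_mul_self_eq hmn hq.inv.posSemidef
  refine ⟨fun x => WithLp.toLp 2 (P *ᵥ innerAtVec b q x),
    isometry_of_inner_eq_innerAt (b := b) fun x y => ?_⟩
  rw [hinner, ← hP, EuclideanSpace.inner_eq_star_dotProduct, WithLp.ofLp_toLp, WithLp.ofLp_toLp,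
    star_trivial, ← mulVec_mulVec, mulVec_transpose, dotProduct_comm (innerAtVec b q x),
    ← dotProduct_mulVec]

end

theorem stmt9 {X : Type*} [MetricSpace X] (n : ℕ) :
    (∃ f : X → EuclideanSpace ℝ (Fin n), Isometry f) ↔
      ((∀ k : ℕ, k ≤ n → ∀ x : Fin (k + 1) → X,
          0 ≤ (-1 : ℝ) ^ (k + 1) * cayleyMenger k x) ∧
        (∀ k : ℕ, (k = n + 1 ∨ k = n + 2) → ∀ x : Fin (k + 1) → X,
          cayleyMenger k x = 0)) := by
  constructor
  · rintro ⟨f, hf⟩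
    refine ⟨fun k _ x => ?_, fun k hk x => ?_⟩
    · rw [← Fin.cons_self_tail x, neg_one_pow_mul_cayleyMenger_cons]
      exact mul_nonneg (by positivity) (hf.det_gramAt_nonneg _ _)
    · rw [← Fin.cons_self_tail x, cayleyMenger_cons,
        hf.det_gramAt_eq_zero _ (by rw [finrank_euclideanSpace_fin]; omega), mul_zero]
  · rintro ⟨hnonneg, hzero⟩
    rcases isEmpty_or_nonempty X with _ | ⟨⟨b⟩⟩
    · exact ⟨isEmptyElim, fun x => isEmptyElim x⟩
    have hzero' (k : ℕ) (hk : k = n + 1 ∨ k = n + 2) (q : Fin k → X) :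
        (gramAt b q).det = 0 := by
      simpa [cayleyMenger_cons] using hzero k hk (Fin.cons b q)
    refine exists_isometry_euclideanSpace_of_det_gramAt b (fun j hj q => ?_) (hzero' _ (.inl rfl))
    rcases (by omega : j ≤ n ∨ j = n + 1 ∨ j = n + 2) with hj | hj
    · have := hnonneg j hj (Fin.cons b q)
      rw [neg_one_pow_mul_cayleyMenger_cons] at this
      exact nonneg_of_mul_nonneg_right this (by positivity)
    · exact (hzero' j hj q).ge
end

section
/- (Menger) A metric space X embeds isometrically in E^n if and only if every subset A ⊆ X with card A ≤ n+3 embeds isometrically in E^n. -/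
/-!
Induct on `n`. Suppose first that some finite subset of `X` embeds in `E^n` with image affinely
spanning `E^n`. Then it contains a frame of `n + 1` points congruent to an affine basis `p`. For
any two points `x, y`, the frame together with `x, y` has at most `n + 3` points, so it embeds in
`E^n`, and after an ambient isometry the embedding agrees with `p` on the frame. A point of `E^n`
is determined by its distances to `p`, so the image of `x` does not depend on `y`; this defines
an isometric embedding of `X`.

Otherwise every subset of at most `n + 3` points embeds into a proper affine subspace of `E^n`,
hence into `E^(n-1)`, and by induction `X` embeds in `E^(n-1) ⊆ E^n`.
-/

open Module RealInnerProductSpace Set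
open scoped Congruent

section Euclidean

variable {V : Type*} [NormedAddCommGroup V] [InnerProductSpace ℝ V]

theorem real_inner_sub_sub_eq_dist_sq (a b c : V) :
    ⟪b - a, c - a⟫ = (dist b a ^ 2 + dist c a ^ 2 - dist b c ^ 2) / 2 := by
  rw [real_inner_eq_norm_mul_self_add_norm_mul_self_sub_norm_sub_mul_self_div_two,
    sub_sub_sub_cancel_right, dist_eq_norm, dist_eq_norm, dist_eq_norm]
  ring

theorem eq_of_forall_dist_eq_of_affineSpan_eq_top {P ι : Type*} [MetricSpace P]
    [NormedAddTorsor V P] {p : ι → P} (hp : affineSpan ℝ (range p) = ⊤) {x y : P}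
    (h : ∀ i, dist x (p i) = dist y (p i)) : x = y := by
  have horth : vectorSpan ℝ (range p) ≤ (ℝ ∙ (y -ᵥ x))ᗮ := by
    rw [vectorSpan_def, Submodule.span_le]
    rintro _ ⟨_, ⟨i, rfl⟩, _, ⟨j, rfl⟩, rfl⟩
    rw [SetLike.mem_coe, Submodule.mem_orthogonal_singleton_iff_inner_right, real_inner_comm]
    exact EuclideanGeometry.inner_vsub_vsub_of_dist_eq_of_dist_eq (h j) (h i)
  rw [← direction_affineSpan, hp, AffineSubspace.direction_top] at horth
  have hself := horth (Submodule.mem_top : y -ᵥ x ∈ ⊤)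
  rw [Submodule.mem_orthogonal_singleton_iff_inner_right, inner_self_eq_zero,
    vsub_eq_zero_iff_eq] at hself
  exact hself.symm

theorem AffineBasis.exists_affineIsometryEquiv_comp_eq [FiniteDimensional ℝ V] {ι : Type*}
    (p : AffineBasis ι ℝ V) {q : ι → V} (hpq : p ≅ q) : ∃ φ : V ≃ᵃⁱ[ℝ] V, φ ∘ p = q := by
  obtain ⟨i₀⟩ := p.nonempty
  set b := p.basisOf i₀
  let L : V →ₗ[ℝ] V := b.constr ℝ fun j => q j - q i₀
  have hLb : ∀ j, L (b j) = q j - q i₀ := b.constr_basis ℝ _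
  -- By polarization, the Gram matrices of the edges at `p i₀` and at `q i₀` agree.
  have hinner : (innerₗ V).compl₁₂ L L = innerₗ V := by
    refine LinearMap.ext_basis b b fun i j => ?_
    rw [LinearMap.compl₁₂_apply, hLb, hLb, innerₗ_apply_apply, innerₗ_apply_apply]
    simp only [b, p.basisOf_apply, vsub_eq_sub, real_inner_sub_sub_eq_dist_sq,
      congruent_iff_dist_eq.mp hpq]
  let E : V ≃ₗᵢ[ℝ] V := (L.isometryOfInner fun u v =>
    LinearMap.congr_fun (LinearMap.congr_fun hinner u) v).toLinearIsometryEquiv rfl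
  refine ⟨((AffineIsometryEquiv.vaddConst ℝ (p i₀)).symm.trans E.toAffineIsometryEquiv).trans
    (AffineIsometryEquiv.vaddConst ℝ (q i₀)), funext fun j => ?_⟩
  by_cases hj : j = i₀
  · subst hj
    simp
  · have hE : E (p j -ᵥ p i₀) = q j - q i₀ := by
      rw [← p.basisOf_apply i₀ ⟨j, hj⟩]
      exact hLb ⟨j, hj⟩
    change E (p j -ᵥ p i₀) +ᵥ q i₀ = q j
    rw [hE, vadd_eq_add, sub_add_cancel]

theorem nonempty_linearIsometry_of_finrank_le {𝕜 W₁ W₂ : Type*} [RCLike 𝕜]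
    [NormedAddCommGroup W₁] [InnerProductSpace 𝕜 W₁] [FiniteDimensional 𝕜 W₁]
    [NormedAddCommGroup W₂] [InnerProductSpace 𝕜 W₂] [FiniteDimensional 𝕜 W₂]
    (h : finrank 𝕜 W₁ ≤ finrank 𝕜 W₂) : Nonempty (W₁ →ₗᵢ[𝕜] W₂) := by
  let b₁ := stdOrthonormalBasis 𝕜 W₁
  let b₂ := stdOrthonormalBasis 𝕜 W₂
  let L : W₁ →ₗ[𝕜] W₂ := b₁.toBasis.constr 𝕜 (b₂ ∘ Fin.castLE h)
  have hL : L ∘ b₁.toBasis = b₂ ∘ Fin.castLE h := funext (b₁.toBasis.constr_basis 𝕜 _)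
  refine ⟨L.isometryOfOrthonormal (v := b₁.toBasis) ?_ ?_⟩
  · rw [OrthonormalBasis.coe_toBasis]
    exact b₁.orthonormal
  · rw [hL]
    exact b₂.orthonormal.comp _ (Fin.castLE_injective h)

end Euclidean

section Embedding

variable {Y V : Type*} [PseudoMetricSpace Y] [NormedAddCommGroup V] [InnerProductSpace ℝ V]
  {g : Y → V}

theorem exists_congruent_affineBasis_of_affineSpan_eq_top (hg : Isometry g)
    (hspan : affineSpan ℝ (range g) = ⊤) :
    ∃ (s : Set V) (b : s → Y) (p : AffineBasis s ℝ V), b ≅ p := by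
  obtain ⟨s, hs, p, hp⟩ := AffineBasis.exists_affine_subbasis hspan
  refine ⟨s, rangeSplitting g ∘ inclusion hs, p, ?_⟩
  rw [← Congruent.comp_left_iff hg]
  convert Congruent.refl (⇑p)
  ext i
  simp [apply_rangeSplitting, hp]

theorem exists_isometry_of_affineSpan_ne_top [FiniteDimensional ℝ V] {W : Type*}
    [NormedAddCommGroup W] [InnerProductSpace ℝ W] [FiniteDimensional ℝ W]
    (hVW : finrank ℝ V ≤ finrank ℝ W + 1) (hg : Isometry g)
    (hspan : affineSpan ℝ (range g) ≠ ⊤) : ∃ f : Y → W, Isometry f := by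
  cases isEmpty_or_nonempty Y with
  | inl _ => exact ⟨isEmptyElim, isometry_subsingleton⟩
  | inr hY =>
    obtain ⟨y₀⟩ := hY
    have hlt : finrank ℝ (vectorSpan ℝ (range g)) < finrank ℝ V := Submodule.finrank_lt <| by
      rwa [Ne, ← AffineSubspace.affineSpan_eq_top_iff_vectorSpan_eq_top_of_nonempty ℝ V V
        ⟨_, mem_range_self y₀⟩]
    obtain ⟨L⟩ := nonempty_linearIsometry_of_finrank_le (𝕜 := ℝ)
      (W₁ := vectorSpan ℝ (range g)) (W₂ := W) (by omega)
    refine ⟨fun y => L ⟨g y -ᵥ g y₀, vsub_mem_vectorSpan ℝ (mem_range_self y) (mem_range_self y₀)⟩,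
      L.isometry.comp (Isometry.of_dist_eq fun y y' => ?_)⟩
    exact (dist_sub_right (g y) (g y') (g y₀)).trans (hg.dist_eq y y')

theorem exists_isometry_of_congruent_affineBasis {X ι : Type*} [MetricSpace X]
    [FiniteDimensional ℝ V] {b : ι → X} (p : AffineBasis ι ℝ V) (hbp : b ≅ p)
    (h : ∀ A : Finset X, A.card ≤ finrank ℝ V + 3 → ∃ f : A → V, Isometry f) :
    ∃ f : X → V, Isometry f := by
  classical
  have := p.finite
  have := Fintype.ofFinite ι
  set B := Finset.univ.image b
  have hB : ∀ x y i, b i ∈ insert x (insert y B) := fun x y i => by simp [B]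
  have hnormal : ∀ x y : X, ∃ g : ↥(insert x (insert y B)) → V,
      Isometry g ∧ ∀ i, g ⟨b i, hB x y i⟩ = p i := by
    intro x y
    have hcard : (insert x (insert y B)).card ≤ finrank ℝ V + 3 := by
      have hBcard : B.card ≤ finrank ℝ V + 1 := p.card_eq_finrank_add_one ▸ Finset.card_image_le
      have := (Finset.card_insert_le x _).trans (Nat.succ_le_succ (Finset.card_insert_le y B))
      omega
    obtain ⟨g, hg⟩ := h _ hcard
    obtain ⟨φ, hφ⟩ := p.exists_affineIsometryEquiv_comp_eq (q := g ∘ fun i => ⟨b i, hB x y i⟩)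
      (hbp.symm.trans (Congruent.comp_right hg fun _ _ => rfl))
    refine ⟨φ.symm ∘ g, φ.symm.isometry.comp hg, fun i => ?_⟩
    rw [Function.comp_apply, φ.symm_apply_eq]
    exact (congrFun hφ i).symm
  have hpoint : ∀ x : X, ∃ z : V, ∀ i, dist z (p i) = dist x (b i) := fun x => by
    obtain ⟨g, hg, hgp⟩ := hnormal x x
    exact ⟨g ⟨x, Finset.mem_insert_self x _⟩, fun i => by rw [← hgp i, hg.dist_eq]; rfl⟩
  choose f hf using hpoint
  refine ⟨f, Isometry.of_dist_eq fun x y => ?_⟩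
  obtain ⟨g, hg, hgp⟩ := hnormal x y
  have hgf : ∀ z (hz : z ∈ insert x (insert y B)), g ⟨z, hz⟩ = f z := fun z hz =>
    eq_of_forall_dist_eq_of_affineSpan_eq_top p.tot fun i => by
      rw [hf, ← hgp i, hg.dist_eq]; rfl
  rw [← hgf x (Finset.mem_insert_self x _),
    ← hgf y (Finset.mem_insert_of_mem (Finset.mem_insert_self y B)), hg.dist_eq]
  rfl

end Embedding

theorem stmt10 {X : Type*} [MetricSpace X] (n : ℕ) :
    (∃ f : X → EuclideanSpace ℝ (Fin n), Isometry f) ↔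
      (∀ A : Finset X, A.card ≤ n + 3 →
        ∃ f : A → EuclideanSpace ℝ (Fin n), Isometry f) := by
  refine ⟨fun ⟨f, hf⟩ A _ => ⟨f ∘ (↑), hf.comp isometry_subtype_coe⟩, fun h => ?_⟩
  induction n with
  | zero =>
    classical
    have : Subsingleton X := ⟨fun x y => by
      obtain ⟨g, hg⟩ := h {x, y} (Finset.card_le_two.trans (by norm_num))
      exact congrArg Subtype.val
        (hg.injective (Subsingleton.elim (g ⟨x, by simp⟩) (g ⟨y, by simp⟩)))⟩
    exact ⟨fun _ => 0, isometry_subsingleton⟩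
  | succ n ih =>
    by_cases hframe : ∃ (A : Finset X) (g : A → EuclideanSpace ℝ (Fin (n + 1))),
        Isometry g ∧ affineSpan ℝ (range g) = ⊤
    · obtain ⟨A, g, hg, hspan⟩ := hframe
      obtain ⟨s, b, p, hbp⟩ := exists_congruent_affineBasis_of_affineSpan_eq_top hg hspan
      exact exists_isometry_of_congruent_affineBasis p (hbp.comp_left isometry_subtype_coe)
        (by simpa using h)
    · push Not at hframe
      obtain ⟨f, hf⟩ := ih fun A hA => by
        obtain ⟨g, hg⟩ := h A (by omega)
        exact exists_isometry_of_affineSpan_ne_top (by simp) hg (hframe A g hg)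
      obtain ⟨L⟩ := nonempty_linearIsometry_of_finrank_le (𝕜 := ℝ)
        (W₁ := EuclideanSpace ℝ (Fin n)) (W₂ := EuclideanSpace ℝ (Fin (n + 1))) (by simp)
      exact ⟨L ∘ f, L.isometry.comp hf⟩
end

section
/- (Blumenthal) Let X be a finite metric space with card X = n+1. Then X embeds isometrically in E^n if and only if for every k = 1,...,n and every (k+1)-tuple (x_0,...,x_k) ∈ X^{k+1}, the Cayley–Menger determinant D_k(x_0,...,x_k) has the sign of (−1)^{k+1} or vanishes. -/
/-!
Row and column operations turn the Cayley–Menger determinant of `x₀, …, x_k` into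
`(-1)^(k+1) 2^k det G`, where `G` is the Gram matrix of the vectors `x_i - x₀`; the principal
minors of `G` are the Gram determinants of subfamilies, so the sign condition says that all
principal minors of `G` are nonnegative. In a Euclidean space `G` is positive semidefinite.
Conversely, nonnegative principal minors make `G` positive semidefinite: `det (1 + t G)` is a
polynomial in `t` with nonnegative coefficients and constant term `1`, so it cannot vanish at
`t = -1/λ` for a negative eigenvalue `λ`. Writing `G = Bᵀ B`, the origin and the columns of `B`
realize the points in `ℝⁿ`.
-/

open Matrix Polynomial

lemma Matrix.det_one_add_smul_pos_of_det_submatrix_nonneg {n : Type*} [Fintype n]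
    [DecidableEq n] {A : Matrix n n ℝ}
    (h : ∀ s : Finset n, 0 ≤ (A.submatrix ((↑) : s → n) (↑)).det) {t : ℝ} (ht : 0 ≤ t) :
    0 < (1 + t • A).det := by
  set p : ℝ[X] := (1 + (X : ℝ[X]) • A.map C).det
  have hcoeff (k : ℕ) : 0 ≤ p.coeff k := by
    rw [coeff_det_one_add_X_smul_eq_sum_minors]
    exact Finset.sum_nonneg fun s _ => h s
  have hcoeff_zero : p.coeff 0 = 1 := by
    rw [coeff_det_one_add_X_smul_eq_sum_minors, Finset.powersetCard_zero, Finset.sum_singleton]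
    exact det_isEmpty
  have heval : p.eval t = (1 + t • A).det := by
    rw [← coe_evalRingHom, RingHom.map_det]
    congr 1
    ext i j
    simp [one_apply]
    split_ifs <;> simp [mul_comm]
  rw [← heval, eval_eq_sum_range, Finset.sum_range_succ', hcoeff_zero]
  have := Finset.sum_nonneg fun i (_ : i ∈ Finset.range p.natDegree) =>
    mul_nonneg (hcoeff (i + 1)) (pow_nonneg ht (i + 1))
  linarith

lemma Matrix.IsHermitian.posSemidef_of_det_submatrix_nonneg {n : Type*} [Fintype n]
    [DecidableEq n] {A : Matrix n n ℝ} (hA : A.IsHermitian)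
    (h : ∀ s : Finset n, 0 ≤ (A.submatrix ((↑) : s → n) (↑)).det) : A.PosSemidef := by
  rw [hA.posSemidef_iff_eigenvalues_nonneg, Pi.le_def]
  intro i
  by_contra! hneg
  set v := ⇑(hA.eigenvectorBasis i)
  have hv : v ≠ 0 := by simpa [v] using hA.eigenvectorBasis.orthonormal.ne_zero i
  have hker : (1 + (-(hA.eigenvalues i)⁻¹) • A) *ᵥ v = 0 := by
    rw [add_mulVec, one_mulVec, smul_mulVec, hA.mulVec_eigenvectorBasis, smul_smul,
      neg_mul, inv_mul_cancel₀ hneg.ne, neg_smul, one_smul, add_neg_cancel]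
  exact (det_one_add_smul_pos_of_det_submatrix_nonneg h (by simpa using hneg.le)).ne'
    (exists_mulVec_eq_zero_iff.mp ⟨v, hv, hker⟩)

lemma Matrix.PosSemidef.exists_gram_eq {ι : Type*} [Fintype ι] {A : Matrix ι ι ℝ}
    (hA : A.PosSemidef) : ∃ v : ι → EuclideanSpace ℝ ι, gram ℝ v = A := by
  classical
  open scoped MatrixOrder in
  obtain ⟨B, rfl⟩ := CStarAlgebra.nonneg_iff_eq_star_mul_self.mp hA.nonneg
  refine ⟨fun i => WithLp.toLp 2 fun l => B l i, ?_⟩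
  ext i j
  simp [gram_apply, mul_apply, PiLp.inner_apply, mul_comm]

lemma Matrix.det_eq_neg_det_submatrix_succ_succ {R : Type*} [CommRing R] {k : ℕ}
    (N : Matrix (Fin (k + 2)) (Fin (k + 2)) R) (hrow : N 0 = Pi.single 1 1)
    (hcol : ∀ i, N i.succ 0 = (Pi.single 0 1 : Fin (k + 1) → R) i) :
    N.det = -(N.submatrix (fun i : Fin k => i.succ.succ) fun j => j.succ.succ).det := by
  rw [det_succ_row_zero, Finset.sum_eq_single_of_mem 1 (Finset.mem_univ _)
    fun j _ hj => by simp [hrow, hj], det_succ_column_zero,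
    Finset.sum_eq_single_of_mem 0 (Finset.mem_univ _) fun i _ hi => by simp [hcol, hi]]
  have h10 : N 1 0 = 1 := by simpa using hcol 0
  simp [hrow, h10, Function.comp_def]

lemma Matrix.det_bordered {R : Type*} [CommRing R] {k : ℕ}
    (D : Matrix (Fin (k + 1)) (Fin (k + 1)) R) :
    (of fun i j : Fin (k + 2) =>
      if hi : i = 0 then (if j = 0 then 0 else 1)
      else if hj : j = 0 then 1
      else D (i.pred hi) (j.pred hj)).det =
    -(of fun i j : Fin k => D i.succ j.succ - D i.succ 0 - D 0 j.succ + D 0 0).det := by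
  set M : Matrix (Fin (k + 2)) (Fin (k + 2)) R := of fun i j =>
      if hi : i = 0 then (if j = 0 then 0 else 1)
      else if hj : j = 0 then 1
      else D (i.pred hi) (j.pred hj)
  -- subtract row `1` from the rows `i ≥ 2`, then column `1` from the columns `j ≥ 2`
  set c : Fin (k + 2) → R := Fin.cases 0 (Fin.cases 0 fun _ => 1)
  set M₁ : Matrix (Fin (k + 2)) (Fin (k + 2)) R := of fun i j => M i j - c i * M 1 j
  set M₂ : Matrix (Fin (k + 2)) (Fin (k + 2)) R := of fun i j => M₁ i j - c j * M₁ i 1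
  have hc₀ : c 0 = 0 := rfl
  have hc₁ : c 1 = 0 := rfl
  have hc₂ (i : Fin k) : c i.succ.succ = 1 := rfl
  have h₁ : M₁.det = M.det :=
    det_eq_of_forall_row_eq_smul_add_const (-c) 1 (by simp [hc₁]) fun i j => by
      simp [M₁, sub_eq_add_neg]
  have h₂ : M₂.det = M₁.det := by
    rw [← det_transpose M₂, ← det_transpose M₁]
    exact det_eq_of_forall_row_eq_smul_add_const (-c) 1 (by simp [hc₁]) fun i j => by
      simp [M₂, sub_eq_add_neg]
  have hrow : M₂ 0 = Pi.single 1 1 := by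
    funext j
    cases j using Fin.cases with
    | zero => simp [M₂, M₁, M, hc₀]
    | succ j => cases j using Fin.cases <;> simp [M₂, M₁, M, hc₀, hc₁, hc₂, Fin.succ_succ_ne_one]
  have hcol (i : Fin (k + 1)) : M₂ i.succ 0 = (Pi.single 0 1 : Fin (k + 1) → R) i := by
    cases i using Fin.cases <;> simp [M₂, M₁, M, hc₀, hc₁, hc₂]
  rw [← h₁, ← h₂, M₂.det_eq_neg_det_submatrix_succ_succ hrow hcol]
  congr 2
  ext i j
  simp [M₂, M₁, M, hc₂]
  ring

/-- The Gram matrix of the vectors `x i - o`, written through the polarization identity so that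
it makes sense in any metric space. -/
noncomputable def distGram {X ι : Type*} [PseudoMetricSpace X] (o : X) (x : ι → X) :
    Matrix ι ι ℝ :=
  of fun i j => (dist o (x i) ^ 2 + dist o (x j) ^ 2 - dist (x i) (x j) ^ 2) / 2

section distGram

variable {X Y ι : Type*} [PseudoMetricSpace X] [PseudoMetricSpace Y]

lemma distGram_apply_self (o : X) (x : ι → X) (i : ι) :
    distGram o x i i = dist o (x i) ^ 2 := by
  simp [distGram]

lemma isHermitian_distGram (o : X) (x : ι → X) : (distGram o x).IsHermitian := by
  ext i j
  simp only [distGram, conjTranspose_apply, of_apply, star_trivial, dist_comm (x i)]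
  ring

lemma distGram_submatrix {κ : Type*} (o : X) (x : ι → X) (e : κ → ι) :
    (distGram o x).submatrix e e = distGram o (x ∘ e) := rfl

lemma Isometry.distGram_comp {f : X → Y} (hf : Isometry f) (o : X) (x : ι → X) :
    distGram (f o) (f ∘ x) = distGram o x := by
  simp [distGram, hf.dist_eq]

lemma distGram_eq_gram {E : Type*} [NormedAddCommGroup E] [InnerProductSpace ℝ E]
    (o : E) (x : ι → E) : distGram o x = gram ℝ (fun i => x i - o) := by
  ext i j
  rw [distGram, of_apply, gram_apply, dist_comm o, dist_comm o, dist_eq_norm, dist_eq_norm,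
    dist_eq_norm, ← sub_sub_sub_cancel_right (x i) (x j) o, norm_sub_sq_real (x i - o)]
  ring

lemma dist_eq_of_distGram_eq {k : ℕ} {x : Fin (k + 1) → X} {y : Fin (k + 1) → Y}
    (h : distGram (x 0) (Fin.tail x) = distGram (y 0) (Fin.tail y)) (a b : Fin (k + 1)) :
    dist (x a) (x b) = dist (y a) (y b) := by
  have h₀ (i : Fin k) : dist (x 0) (x i.succ) = dist (y 0) (y i.succ) := by
    have := congr_fun₂ h i i
    rw [distGram_apply_self, distGram_apply_self] at this
    exact (sq_eq_sq₀ dist_nonneg dist_nonneg).mp this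
  have hsucc (i j : Fin k) : dist (x i.succ) (x j.succ) = dist (y i.succ) (y j.succ) := by
    have := congr_fun₂ h i j
    simp only [distGram, of_apply, Fin.tail, h₀] at this
    exact (sq_eq_sq₀ dist_nonneg dist_nonneg).mp (by linarith)
  cases a using Fin.cases <;> cases b using Fin.cases <;>
    simp [h₀, hsucc, dist_comm _ (x 0), dist_comm _ (y 0)]

lemma posSemidef_distGram_of_forall_det_nonneg {n : ℕ}
    (h : ∀ k, 1 ≤ k → k ≤ n → ∀ y : Fin (k + 1) → X, 0 ≤ (distGram (y 0) (Fin.tail y)).det)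
    [Fintype ι] (hι : Fintype.card ι ≤ n) (o : X) (x : ι → X) : (distGram o x).PosSemidef := by
  classical
  refine (isHermitian_distGram o x).posSemidef_of_det_submatrix_nonneg fun s => ?_
  rcases s.eq_empty_or_nonempty with rfl | hs
  · simp
  rw [← det_submatrix_equiv_self s.equivFin.symm, submatrix_submatrix, distGram_submatrix]
  simpa using h s.card (Finset.card_pos.mpr hs) ((s.card_le_univ).trans hι)
    (Fin.cons o (x ∘ (↑) ∘ s.equivFin.symm))

end distGram

lemma cayleyMenger_eq_det_distGram {X : Type*} [PseudoMetricSpace X] (k : ℕ)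
    (x : Fin (k + 1) → X) :
    cayleyMenger k x = (-1) ^ (k + 1) * 2 ^ k * (distGram (x 0) (Fin.tail x)).det := by
  have hQ : (of fun i j : Fin k => dist (x i.succ) (x j.succ) ^ 2 - dist (x i.succ) (x 0) ^ 2
      - dist (x 0) (x j.succ) ^ 2 + dist (x 0) (x 0) ^ 2) =
      (-2 : ℝ) • distGram (x 0) (Fin.tail x) := by
    ext i j
    simp only [distGram, Fin.tail, of_apply, Matrix.smul_apply, smul_eq_mul, dist_self,
      dist_comm (x i.succ) (x 0)]
    ring
  refine (det_bordered (of fun i j => dist (x i) (x j) ^ 2)).trans ?_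
  simp only [of_apply, hQ, det_smul, Fintype.card_fin, neg_pow (2 : ℝ)]
  ring

lemma cayleyMenger_sign_iff {X : Type*} [PseudoMetricSpace X] (k : ℕ) (x : Fin (k + 1) → X) :
    (0 < (-1 : ℝ) ^ (k + 1) * cayleyMenger k x ∨ cayleyMenger k x = 0) ↔
      0 ≤ (distGram (x 0) (Fin.tail x)).det := by
  have h : (-1 : ℝ) ^ (k + 1) * cayleyMenger k x =
      2 ^ k * (distGram (x 0) (Fin.tail x)).det := by
    rw [cayleyMenger_eq_det_distGram, ← mul_assoc, ← mul_assoc, ← pow_add,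
      Even.neg_one_pow ⟨k + 1, rfl⟩, one_mul]
  rw [h, cayleyMenger_eq_det_distGram, le_iff_lt_or_eq, eq_comm (a := (0 : ℝ))]
  simp [pow_pos, mul_pos_iff_of_pos_left]

theorem stmt11 {X : Type*} [MetricSpace X] [Fintype X] (n : ℕ)
    (hcard : Fintype.card X = n + 1) :
    (∃ f : X → EuclideanSpace ℝ (Fin n), Isometry f) ↔
      (∀ k : ℕ, 1 ≤ k → k ≤ n → ∀ x : Fin (k + 1) → X,
        0 < (-1 : ℝ) ^ (k + 1) * cayleyMenger k x ∨ cayleyMenger k x = 0) := by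
  simp_rw [cayleyMenger_sign_iff]
  constructor
  · rintro ⟨f, hf⟩ k - - x
    rw [← hf.distGram_comp, distGram_eq_gram]
    exact (posSemidef_gram ℝ _).det_nonneg
  · intro h
    set E : Fin (n + 1) ≃ X := (Fintype.equivFinOfCardEq hcard).symm
    obtain ⟨v, hv⟩ :=
      (posSemidef_distGram_of_forall_det_nonneg h (by simp) (E 0) (Fin.tail E)).exists_gram_eq
    set w : Fin (n + 1) → EuclideanSpace ℝ (Fin n) := Fin.cons 0 v
    have hw : distGram (w 0) (Fin.tail w) = distGram (E 0) (Fin.tail E) := by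
      simp [w, distGram_eq_gram, hv]
    refine ⟨w ∘ E.symm, Isometry.of_dist_eq fun p q => ?_⟩
    simpa using dist_eq_of_distGram_eq hw (E.symm p) (E.symm q)
end

section
/- Let X be a finite metric space with card X = n+1, n ≥ 1. Then X embeds isometrically in E^n if and only if Sch(x_0, x_1, ..., x_k) ≥ 0 for every (x_0,...,x_k) ∈ X^{k+1} and every k = 1,...,n. -/
/-- The Schoenberg determinant of `k+1` points of a metric space. -/
def schDet {X : Type*} [PseudoMetricSpace X] (k : ℕ) (x : Fin (k + 1) → X) : ℝ :=
  Matrix.det (Matrix.of fun i j : Fin k =>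
    dist (x 0) (x i.succ) ^ 2 + dist (x 0) (x j.succ) ^ 2 -
      dist (x i.succ) (x j.succ) ^ 2)

/-!
Translating the base point `x₀` to the origin, the Schoenberg matrix `τ` of points of a real inner
product space is twice the Gram matrix of the vectors `xᵢ - x₀`, so it is positive semidefinite
and its determinant is nonnegative. Conversely, the principal minors of the Schoenberg matrix of
an enumeration of `X` are themselves Schoenberg determinants, so their nonnegativity makes `τ / 2`
positive semidefinite, hence the Gram matrix of `n` vectors of `ℝⁿ`; these vectors together with
the origin reproduce all the distances of `X`, because `τ` determines them.
-/

open Matrix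

namespace Matrix

variable {n R : Type*} [Fintype n] [DecidableEq n]

open Polynomial in
/-- As a polynomial in `r`, `det (1 + r • M)` has constant term `1` and its other coefficients
are sums of principal minors of `M`. -/
theorem one_le_det_one_add_smul [CommRing R] [LinearOrder R] [IsStrictOrderedRing R]
    {M : Matrix n n R} (hM : ∀ s : Finset n, 0 ≤ (M.submatrix (↑) (↑) : Matrix s s R).det)
    {r : R} (hr : 0 ≤ r) : 1 ≤ det (1 + r • M) := by
  have heval : (det (1 + (X : R[X]) • M.map C)).eval r = det (1 + r • M) := by
    simp [eval_det, ← smul_eq_mul_diagonal]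
  rw [← heval, eval_eq_sum_range, Finset.sum_range_succ']
  simp only [coeff_det_one_add_X_smul_eq_sum_minors]
  refine le_add_of_nonneg_of_le (Finset.sum_nonneg fun k _ => mul_nonneg
    (Finset.sum_nonneg fun s _ => hM s) (pow_nonneg hr _)) ?_
  simp [Finset.powersetCard_zero]

/-- An eigenvalue `μ < 0` would make `1 - μ⁻¹ • M` singular, although `-μ⁻¹ > 0`. -/
theorem PosSemidef.of_det_submatrix_nonneg {M : Matrix n n ℝ} (hM : M.IsHermitian)
    (h : ∀ s : Finset n, 0 ≤ (M.submatrix (↑) (↑) : Matrix s s ℝ).det) : M.PosSemidef := by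
  refine hM.posSemidef_iff_eigenvalues_nonneg.mpr fun i => not_lt.mp fun hneg => ?_
  set μ := hM.eigenvalues i
  have hsingular : det (1 + (-μ⁻¹) • M) = 0 := by
    refine exists_mulVec_eq_zero_iff.mp ⟨hM.eigenvectorBasis i, fun h0 => ?_, ?_⟩
    · exact hM.eigenvectorBasis.orthonormal.ne_zero i
        (by simpa using congrArg (WithLp.toLp 2) h0)
    · rw [add_mulVec, smul_mulVec, hM.mulVec_eigenvectorBasis, one_mulVec, smul_smul,
        neg_mul, inv_mul_cancel₀ hneg.ne, neg_smul, one_smul, add_neg_cancel]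
  have hpos := one_le_det_one_add_smul h (neg_nonneg.mpr (inv_nonpos.mpr hneg.le))
  linarith

open scoped MatrixOrder ComplexOrder in
theorem PosSemidef.exists_gram_eq_s13 {𝕜 : Type*} [RCLike 𝕜] {ι : Type*} [Fintype ι]
    {M : Matrix ι ι 𝕜} (hM : M.PosSemidef) : ∃ v : ι → EuclideanSpace 𝕜 ι, gram 𝕜 v = M := by
  classical
  obtain ⟨B, rfl⟩ := CStarAlgebra.nonneg_iff_eq_star_mul_self.mp hM.nonneg
  refine ⟨fun i => WithLp.toLp 2 fun k => B k i, Matrix.ext fun i j => ?_⟩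
  simp [gram_apply, PiLp.inner_apply, mul_apply, star_eq_conjTranspose, mul_comm]

end Matrix

theorem dist_sq_add_dist_sq_sub_dist_sq {E : Type*} [NormedAddCommGroup E]
    [InnerProductSpace ℝ E] (o a b : E) :
    dist o a ^ 2 + dist o b ^ 2 - dist a b ^ 2 = 2 * inner ℝ (a - o) (b - o) := by
  rw [dist_comm o a, dist_comm o b, dist_eq_norm, dist_eq_norm, dist_eq_norm,
    ← sub_sub_sub_cancel_right a b o, norm_sub_sq_real (a - o)]
  ring

section Schoenberg

variable {X Y E : Type*} [PseudoMetricSpace X] [PseudoMetricSpace Y]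
  [NormedAddCommGroup E] [InnerProductSpace ℝ E]

def schMatrix (k : ℕ) (x : Fin (k + 1) → X) : Matrix (Fin k) (Fin k) ℝ :=
  of fun i j => dist (x 0) (x i.succ) ^ 2 + dist (x 0) (x j.succ) ^ 2 -
    dist (x i.succ) (x j.succ) ^ 2

theorem schDet_eq_det_schMatrix (k : ℕ) (x : Fin (k + 1) → X) :
    schDet k x = (schMatrix k x).det := rfl

theorem isHermitian_schMatrix (k : ℕ) (x : Fin (k + 1) → X) : (schMatrix k x).IsHermitian :=
  Matrix.ext fun i j => by
    simp only [schMatrix, conjTranspose_apply, of_apply, star_trivial, dist_comm (x i.succ)]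
    ring

theorem schMatrix_cons_comp {k m : ℕ} (x : Fin (m + 1) → X) (σ : Fin k → Fin m) :
    schMatrix k (Fin.cons (x 0) (x ∘ Fin.succ ∘ σ)) = (schMatrix m x).submatrix σ σ := rfl

theorem schDet_comp_isometry {f : X → Y} (hf : Isometry f) (k : ℕ) (x : Fin (k + 1) → X) :
    schDet k (f ∘ x) = schDet k x := by
  simp only [schDet, Function.comp_apply, hf.dist_eq]

/-- The diagonal entries `τᵢᵢ = 2 d(x₀, xᵢ)²` give the distances to the base point, and then the
off-diagonal entries give the others. -/
theorem dist_eq_of_schMatrix_eq {k : ℕ} {x : Fin (k + 1) → X} {y : Fin (k + 1) → Y}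
    (h : schMatrix k x = schMatrix k y) (i j : Fin (k + 1)) :
    dist (x i) (x j) = dist (y i) (y j) := by
  have hbase (a : Fin k) : dist (x 0) (x a.succ) = dist (y 0) (y a.succ) := by
    have := congrFun₂ h a a
    simp only [schMatrix, of_apply, dist_self] at this
    exact (pow_left_inj₀ dist_nonneg dist_nonneg two_ne_zero).mp (by linarith)
  induction i using Fin.cases <;> induction j using Fin.cases
  · simp
  · exact hbase _
  · rw [dist_comm, hbase, dist_comm]
  case succ.succ a b =>
    have := congrFun₂ h a b
    simp only [schMatrix, of_apply, hbase] at this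
    exact (pow_left_inj₀ dist_nonneg dist_nonneg two_ne_zero).mp (by linarith)

theorem schMatrix_eq_two_smul_gram (k : ℕ) (p : Fin (k + 1) → E) :
    schMatrix k p = (2 : ℝ) • gram ℝ fun i => p i.succ - p 0 :=
  Matrix.ext fun _ _ => dist_sq_add_dist_sq_sub_dist_sq _ _ _

theorem schDet_nonneg (k : ℕ) (p : Fin (k + 1) → E) : 0 ≤ schDet k p := by
  rw [schDet_eq_det_schMatrix, schMatrix_eq_two_smul_gram, det_smul]
  exact mul_nonneg (by positivity) (posSemidef_gram ℝ _).det_nonneg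

theorem posSemidef_schMatrix {n : ℕ} (x : Fin (n + 1) → X)
    (h : ∀ k : ℕ, 1 ≤ k → k ≤ n → ∀ y : Fin (k + 1) → X, 0 ≤ schDet k y) :
    (schMatrix n x).PosSemidef := by
  refine PosSemidef.of_det_submatrix_nonneg (isHermitian_schMatrix n x) fun s => ?_
  let g : Fin s.card ≃ s := s.equivFin.symm
  rw [← det_submatrix_equiv_self g, submatrix_submatrix, ← schMatrix_cons_comp,
    ← schDet_eq_det_schMatrix]
  rcases Nat.eq_zero_or_pos s.card with hs | hs
  · have : IsEmpty (Fin s.card) := hs ▸ Fin.isEmpty'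
    simp [schDet_eq_det_schMatrix]
  · exact h _ hs (s.card_le_univ.trans_eq (Fintype.card_fin n)) _

theorem exists_euclidean_dist_eq_of_posSemidef_schMatrix {n : ℕ} {x : Fin (n + 1) → X}
    (hx : (schMatrix n x).PosSemidef) :
    ∃ p : Fin (n + 1) → EuclideanSpace ℝ (Fin n), ∀ i j, dist (p i) (p j) = dist (x i) (x j) := by
  obtain ⟨v, hv⟩ := (hx.smul (by norm_num : (0 : ℝ) ≤ 1 / 2)).exists_gram_eq_s13
  refine ⟨Fin.cons 0 v, dist_eq_of_schMatrix_eq ?_⟩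
  rw [schMatrix_eq_two_smul_gram]
  simp [hv, smul_smul]

end Schoenberg

theorem stmt13_general {X : Type*} [MetricSpace X] [Fintype X] (n : ℕ)
    (hcard : Fintype.card X = n + 1) :
    (∃ f : X → EuclideanSpace ℝ (Fin n), Isometry f) ↔
      (∀ k : ℕ, 1 ≤ k → k ≤ n → ∀ x : Fin (k + 1) → X, 0 ≤ schDet k x) := by
  constructor
  · rintro ⟨f, hf⟩ k - - x
    exact schDet_comp_isometry hf k x ▸ schDet_nonneg k (f ∘ x)
  · intro h
    let e := (Fintype.equivFinOfCardEq hcard).symm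
    obtain ⟨p, hp⟩ := exists_euclidean_dist_eq_of_posSemidef_schMatrix (posSemidef_schMatrix e h)
    refine ⟨p ∘ e.symm, Isometry.of_dist_eq fun a b => ?_⟩
    simpa using hp (e.symm a) (e.symm b)

theorem stmt13 {X : Type*} [MetricSpace X] [Fintype X] (n : ℕ) (hn : 1 ≤ n)
    (hcard : Fintype.card X = n + 1) :
    (∃ f : X → EuclideanSpace ℝ (Fin n), Isometry f) ↔
      (∀ k : ℕ, 1 ≤ k → k ≤ n → ∀ x : Fin (k + 1) → X, 0 ≤ schDet k x) :=
  stmt13_general n hcard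
end

section
/- Let (X,d) be a metric space with marked point p, and let f : M_n → ℝ be continuous and homogeneous of degree s₀ > 0. Define δ(x_1,...,x_n) = max_i d(x_i,p) and f*(x_1,...,x_n) = f(m(x_1,...,x_n)/δ(x_1,...,x_n)) for (x_1,...,x_n) ≠ (p,...,p), and f*(p,...,p) = 0, where m(x_1,...,x_n) is the distance matrix (d(x_i,x_j)). If there exist points α_1,...,α_n in some pretangent space Ω at p with f(m(α_1,...,α_n)) < 0, then liminf_{x_1,...,x_n → p} f*(x_1,...,x_n) < 0. Conversely, if liminf_{x_1,...,x_n → p} f*(x_1,...,x_n) ≥ 0, then for every pretangent space Ω to X at p and all α_1,...,α_n ∈ Ω the inequality f(m(α_1,...,α_n)) ≥ 0 holds. (Transfer Principle, single-function case.) -/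
open Filter

/-- `r` is a normalizing sequence: positive reals tending to zero. -/
def NormSeq (r : ℕ → ℝ) : Prop :=
  (∀ m, 0 < r m) ∧ Tendsto r atTop (nhds 0)

/-- Two sequences are mutually stable w.r.t. the normalizing sequence `r`. -/
def MutuallyStable {X : Type*} [MetricSpace X] (r : ℕ → ℝ) (x y : ℕ → X) : Prop :=
  ∃ L : ℝ, Tendsto (fun m => dist (x m) (y m) / r m) atTop (nhds L)

/-- A maximal self-stable family of sequences containing the constant sequence `p`;
its metric identification is a pretangent space `Ω_{p,r}`. -/
def MaxSelfStable {X : Type*} [MetricSpace X] (r : ℕ → ℝ) (p : X) (F : Set (ℕ → X)) : Prop :=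
  Function.const ℕ p ∈ F ∧
    (∀ x ∈ F, ∀ y ∈ F, MutuallyStable r x y) ∧
    (∀ z : ℕ → X, z ∉ F → ∃ x ∈ F, ¬ MutuallyStable r x z)

open Classical in
/-- The normalized function `f*` associated with `f` and the marked point `p`. -/
noncomputable def fstar {X : Type*} [MetricSpace X] (n : ℕ)
    (f : Matrix (Fin n) (Fin n) ℝ → ℝ) (p : X) : (Fin n → X) → ℝ :=
  fun x =>
    if x = Function.const (Fin n) p then 0
    else f ((⨆ i, dist (x i) p)⁻¹ • Matrix.of fun i j => dist (x i) (x j))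

/-! Let the tuple `x m` represent `α` in `Ω_{p,r}` and let `ρ = max_i ρ(α_i, p̃)`. If `ρ = 0`, the
triangle inequality forces `m(α) = 0`, contradicting `f (m α) < 0` since `f 0 = 0`. Otherwise
`δ(x m) / r m → ρ`, so the normalized matrices `m(x m) / δ(x m)` tend to `m(α) / ρ`, and
`f*(x m) → ρ ^ (-s₀) * f (m α) < 0` while `x m → (p, …, p)`. As `f*` is bounded below (the
normalized matrices have entries in `[0, 2]`, a compact set), the liminf is negative. The second
statement is the contrapositive of the first. -/

open Topology

lemma map_zero_of_homogeneous {E : Type*} [AddCommMonoid E] [Module ℝ E] {f : E → ℝ} {s₀ : ℝ}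
    (hs₀ : 0 < s₀) (hhom : ∀ δ : ℝ, 0 ≤ δ → ∀ t : E, f (δ • t) = δ ^ s₀ * f t) : f 0 = 0 := by
  simpa [Real.zero_rpow hs₀.ne'] using hhom 0 le_rfl 0

lemma liminf_le_of_tendsto_comp {α β : Type*} {g : α → ℝ} {l : Filter α} {lb : Filter β}
    [lb.NeBot] {u : β → α} {v : ℝ} (hu : Tendsto u lb l) (hgu : Tendsto (g ∘ u) lb (𝓝 v))
    (hg : IsBoundedUnder (· ≥ ·) l g) : liminf g l ≤ v :=
  le_of_forall_gt_imp_ge_of_dense fun _ hw =>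
    liminf_le_of_frequently_le (hu.frequently (hgu.eventually (eventually_le_nhds hw)).frequently) hg

lemma tendsto_ciSup_of_fintype {ι β : Type*} [Fintype ι] [Nonempty ι] {l : Filter β}
    {u : β → ι → ℝ} {c : ι → ℝ} (h : ∀ i, Tendsto (fun b => u b i) l (𝓝 (c i))) :
    Tendsto (fun b => ⨆ i, u b i) l (𝓝 (⨆ i, c i)) := by
  simpa [Finset.sup'_univ_eq_ciSup] using
    Tendsto.finset_sup'_nhds_apply (f := fun i b => u b i) Finset.univ_nonempty fun i _ => h i

section fstar

variable {X : Type*} [MetricSpace X] {n : ℕ} {f : Matrix (Fin n) (Fin n) ℝ → ℝ} {p : X}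

lemma fstar_of_ne {y : Fin n → X} (hy : y ≠ Function.const (Fin n) p) :
    fstar n f p y = f ((⨆ i, dist (y i) p)⁻¹ • Matrix.of fun i j => dist (y i) (y j)) :=
  if_neg hy

lemma inv_iSup_dist_mul_dist_mem_Icc {y : Fin n → X} (hy : y ≠ Function.const (Fin n) p)
    (i j : Fin n) : (⨆ k, dist (y k) p)⁻¹ * dist (y i) (y j) ∈ Set.Icc (0 : ℝ) 2 := by
  obtain ⟨k₀, hk₀⟩ : ∃ k, y k ≠ p := by
    by_contra! h
    exact hy (funext h)
  have hle : ∀ k, dist (y k) p ≤ ⨆ k, dist (y k) p :=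
    le_ciSup (Set.finite_range _).bddAbove
  have hδ : 0 < ⨆ k, dist (y k) p := (dist_pos.2 hk₀).trans_le (hle k₀)
  refine ⟨by positivity, (inv_mul_le_iff₀ hδ).2 ?_⟩
  calc dist (y i) (y j) ≤ dist (y i) p + dist (y j) p := dist_triangle_right _ _ _
    _ ≤ (⨆ k, dist (y k) p) * 2 := by linarith [hle i, hle j]

lemma bddBelow_range_fstar (hf : Continuous f) : BddBelow (Set.range (fstar n f p)) := by
  let K : Set (Matrix (Fin n) (Fin n) ℝ) :=
    Set.univ.pi fun _ => Set.univ.pi fun _ => Set.Icc 0 2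
  have hK : IsCompact K := isCompact_univ_pi fun _ => isCompact_univ_pi fun _ => isCompact_Icc
  refine ((hK.bddBelow_image hf.continuousOn).insert 0).mono ?_
  rintro _ ⟨y, rfl⟩
  by_cases hy : y = Function.const (Fin n) p
  · simp [fstar, hy]
  · rw [fstar_of_ne hy]
    exact Set.mem_insert_of_mem _ ⟨_, fun i _ j _ => inv_iSup_dist_mul_dist_mem_Icc hy i j, rfl⟩

end fstar

lemma MaxSelfStable.exists_tendsto_dist_div {X : Type*} [MetricSpace X] {r : ℕ → ℝ} {p : X}
    {F : Set (ℕ → X)} (hF : MaxSelfStable r p F) {x : ℕ → X} (hx : x ∈ F) :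
    ∃ c, Tendsto (fun m => dist (x m) p / r m) atTop (𝓝 c) :=
  hF.2.1 x hx _ hF.1

namespace NormSeq

variable {X : Type*} [MetricSpace X] {p : X} {r : ℕ → ℝ} {n : ℕ} {x : Fin n → ℕ → X}
  {ρ : Fin n → ℝ} {D : Matrix (Fin n) (Fin n) ℝ}

lemma tendsto_of_tendsto_dist_div (hr : NormSeq r) {y : ℕ → X} {c : ℝ}
    (hy : Tendsto (fun m => dist (y m) p / r m) atTop (𝓝 c)) : Tendsto y atTop (𝓝 p) := by
  rw [tendsto_iff_dist_tendsto_zero]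
  simpa [div_mul_cancel₀ _ (hr.1 _).ne'] using hy.mul hr.2

lemma le_add_of_tendsto_dist_div (hr : NormSeq r)
    (hρ : ∀ i, Tendsto (fun m => dist (x i m) p / r m) atTop (𝓝 (ρ i)))
    (hD : ∀ i j, Tendsto (fun m => dist (x i m) (x j m) / r m) atTop (𝓝 (D i j))) (i j : Fin n) :
    D i j ≤ ρ i + ρ j :=
  le_of_tendsto_of_tendsto' (hD i j) ((hρ i).add (hρ j)) fun m => by
    rw [← add_div]
    exact div_le_div_of_nonneg_right (dist_triangle_right _ _ _) (hr.1 m).le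

lemma tendsto_inv_iSup_dist_smul (hr : NormSeq r)
    (hρ : ∀ i, Tendsto (fun m => dist (x i m) p / r m) atTop (𝓝 (ρ i)))
    (hD : ∀ i j, Tendsto (fun m => dist (x i m) (x j m) / r m) atTop (𝓝 (D i j)))
    (hpos : 0 < ⨆ i, ρ i) :
    Tendsto (fun m => (⨆ k, dist (x k m) p)⁻¹ • Matrix.of fun i j => dist (x i m) (x j m))
      atTop (𝓝 ((⨆ i, ρ i)⁻¹ • D)) := by
  have : Nonempty (Fin n) := by
    by_contra h
    rw [not_nonempty_iff] at h
    simp at hpos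
  have hsup : Tendsto (fun m => (⨆ k, dist (x k m) p) / r m) atTop (𝓝 (⨆ i, ρ i)) := by
    simp_rw [div_eq_mul_inv, Real.iSup_mul_of_nonneg (inv_nonneg.2 (hr.1 _).le)]
    exact tendsto_ciSup_of_fintype fun i => by simpa only [div_eq_mul_inv] using hρ i
  have hentry : ∀ i j, Tendsto (fun m => (⨆ k, dist (x k m) p)⁻¹ * dist (x i m) (x j m))
      atTop (𝓝 ((⨆ i, ρ i)⁻¹ * D i j)) := fun i j => by
    rw [← div_eq_inv_mul]
    refine ((hD i j).div hsup hpos.ne').congr fun m => ?_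
    rw [Pi.div_apply, div_div_div_cancel_right₀ (hr.1 m).ne', div_eq_inv_mul]
  exact tendsto_pi_nhds.2 fun i => tendsto_pi_nhds.2 (hentry i)

end NormSeq

theorem liminf_fstar_neg_of_tendsto {X : Type*} [MetricSpace X] {p : X} {n : ℕ}
    {f : Matrix (Fin n) (Fin n) ℝ → ℝ} {s₀ : ℝ} (hs₀ : 0 < s₀) (hf : Continuous f)
    (hhom : ∀ δ : ℝ, 0 ≤ δ → ∀ t : Matrix (Fin n) (Fin n) ℝ, f (δ • t) = δ ^ s₀ * f t)
    {r : ℕ → ℝ} {x : Fin n → ℕ → X} {ρ : Fin n → ℝ} {D : Matrix (Fin n) (Fin n) ℝ}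
    (hr : NormSeq r) (hρ : ∀ i, Tendsto (fun m => dist (x i m) p / r m) atTop (𝓝 (ρ i)))
    (hD : ∀ i j, Tendsto (fun m => dist (x i m) (x j m) / r m) atTop (𝓝 (D i j)))
    (hfD : f D < 0) :
    liminf (fstar n f p) (𝓝 (Function.const (Fin n) p)) < 0 := by
  obtain ⟨i₀, hi₀⟩ : ∃ i, 0 < ρ i := by
    by_contra! h
    have hD0 : D = 0 := by
      ext i j
      have hle := hr.le_add_of_tendsto_dist_div hρ hD i j
      have hnonneg : 0 ≤ D i j :=
        ge_of_tendsto' (hD i j) fun m => div_nonneg dist_nonneg (hr.1 m).le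
      simp only [Matrix.zero_apply]
      linarith [h i, h j]
    simp [hD0, map_zero_of_homogeneous hs₀ hhom] at hfD
  have hL : 0 < ⨆ i, ρ i := hi₀.trans_le (le_ciSup (Set.finite_range _).bddAbove i₀)
  have hne : ∀ᶠ m in atTop, (fun i => x i m) ≠ Function.const (Fin n) p := by
    filter_upwards [(hρ i₀).eventually (eventually_gt_nhds hi₀)] with m hm hx
    simp [show x i₀ m = p from congrFun hx i₀] at hm
  have hlim : Tendsto (fun m => fstar n f p fun i => x i m) atTop
      (𝓝 (f ((⨆ i, ρ i)⁻¹ • D))) :=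
    ((hf.tendsto _).comp (hr.tendsto_inv_iSup_dist_smul hρ hD hL)).congr'
      (hne.mono fun m hm => (fstar_of_ne hm).symm)
  calc liminf (fstar n f p) (𝓝 (Function.const (Fin n) p))
      ≤ f ((⨆ i, ρ i)⁻¹ • D) :=
        liminf_le_of_tendsto_comp
          (tendsto_pi_nhds.2 fun i => hr.tendsto_of_tendsto_dist_div (hρ i)) hlim
          (bddBelow_range_fstar hf).isBoundedUnder_of_range
    _ < 0 := by
        rw [hhom _ (inv_nonneg.2 hL.le)]
        exact mul_neg_of_pos_of_neg (Real.rpow_pos_of_pos (inv_pos.2 hL) s₀) hfD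

theorem MaxSelfStable.liminf_fstar_neg {X : Type*} [MetricSpace X] {p : X} {n : ℕ}
    {f : Matrix (Fin n) (Fin n) ℝ → ℝ} {s₀ : ℝ} (hs₀ : 0 < s₀) (hf : Continuous f)
    (hhom : ∀ δ : ℝ, 0 ≤ δ → ∀ t : Matrix (Fin n) (Fin n) ℝ, f (δ • t) = δ ^ s₀ * f t)
    {r : ℕ → ℝ} {F : Set (ℕ → X)} {x : Fin n → ℕ → X} {D : Matrix (Fin n) (Fin n) ℝ}
    (hr : NormSeq r) (hF : MaxSelfStable r p F) (hx : ∀ i, x i ∈ F)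
    (hD : ∀ i j, Tendsto (fun m => dist (x i m) (x j m) / r m) atTop (𝓝 (D i j)))
    (hfD : f D < 0) :
    liminf (fstar n f p) (𝓝 (Function.const (Fin n) p)) < 0 := by
  choose ρ hρ using fun i => hF.exists_tendsto_dist_div (hx i)
  exact liminf_fstar_neg_of_tendsto hs₀ hf hhom hr hρ hD hfD

/-- Transfer principle (single-function case). Points of a pretangent space are
represented by members of a maximal self-stable family `F`, and the distance matrix
`D` of such points is given by the limits `D i j = lim dist (x i m) (x j m) / r m`. -/
theorem stmt19 {X : Type*} [MetricSpace X] (p : X) (n : ℕ)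
    (f : Matrix (Fin n) (Fin n) ℝ → ℝ) (s₀ : ℝ) (hs₀ : 0 < s₀)
    (hf : Continuous f)
    (hhom : ∀ δ : ℝ, 0 ≤ δ → ∀ t : Matrix (Fin n) (Fin n) ℝ, f (δ • t) = δ ^ s₀ * f t) :
    ((∃ (r : ℕ → ℝ) (F : Set (ℕ → X)) (x : Fin n → ℕ → X)
        (D : Matrix (Fin n) (Fin n) ℝ),
        NormSeq r ∧ MaxSelfStable r p F ∧ (∀ i, x i ∈ F) ∧
        (∀ i j, Tendsto (fun m => dist (x i m) (x j m) / r m) atTop (nhds (D i j))) ∧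
        f D < 0) →
      Filter.liminf (fstar n f p) (nhds (Function.const (Fin n) p)) < 0) ∧
    (0 ≤ Filter.liminf (fstar n f p) (nhds (Function.const (Fin n) p)) →
      ∀ (r : ℕ → ℝ) (F : Set (ℕ → X)) (x : Fin n → ℕ → X)
        (D : Matrix (Fin n) (Fin n) ℝ),
        NormSeq r → MaxSelfStable r p F → (∀ i, x i ∈ F) →
        (∀ i j, Tendsto (fun m => dist (x i m) (x j m) / r m) atTop (nhds (D i j))) →
        0 ≤ f D) := by
  refine ⟨fun ⟨_, _, _, _, hr, hF, hx, hD, hfD⟩ => hF.liminf_fstar_neg hs₀ hf hhom hr hx hD hfD,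
    fun hli _ _ _ _ hr hF hx hD => not_lt.1 fun hfD => ?_⟩
  exact (hF.liminf_fstar_neg hs₀ hf hhom hr hx hD hfD).not_ge hli
end
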